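/- arXiv:1309.0893 — 2 statements merged into one kernel-verified Lean document; each statement's English description precedes it below -/
import Mathlib

section
/- Let Y be a set, let σ : X → P(Y*) be any assignment of languages to variables, and let σ̂ : T X → P(Y*) be the structurally induced language interpretation (σ̂ is a homomorphism for the semiring operations on languages and σ̂(μx.t) = ⋃_{n≥0} σ̂(nx.t)). Then for every μ-expression t and variable x, σ̂(μx.t) is the least language A ⊆ Y* such that σ̂[x↦A](t) ⊆ A; that is, σ̂[x↦σ̂(μx.t)](t) = σ̂(μx.t), and for every language A with σ̂[x↦A](t) ⊆ A one has σ̂(μx.t) ⊆ A. -/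
/-- μ-expressions over a set `X` of variables:
`t ::= x | t + t | t·t | 0 | 1 | μx.t`. -/
inductive MuTerm (X : Type) : Type
  | var : X → MuTerm X
  | zero : MuTerm X
  | one : MuTerm X
  | add : MuTerm X → MuTerm X → MuTerm X
  | mul : MuTerm X → MuTerm X → MuTerm X
  | mu : X → MuTerm X → MuTerm X

namespace MuTerm

variable {X : Type}

/-- Size of a term (used for termination of substitution). -/
def size : MuTerm X → ℕ
  | var _ => 1
  | zero => 1
  | one => 1
  | add s t => size s + size t + 1
  | mul s t => size s + size t + 1
  | mu _ t => size t + 1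

variable [DecidableEq X]

/-- Free variables of a μ-expression. -/
def fv : MuTerm X → Finset X
  | var x => {x}
  | zero => ∅
  | one => ∅
  | add s t => fv s ∪ fv t
  | mul s t => fv s ∪ fv t
  | mu x t => fv t \ {x}

/-- All (free and bound) variables of a μ-expression. -/
def vars : MuTerm X → Finset X
  | var x => {x}
  | zero => ∅
  | one => ∅
  | add s t => vars s ∪ vars t
  | mul s t => vars s ∪ vars t
  | mu x t => insert x (vars t)

/-- Rename free occurrences of the variable `y` to `z`. -/
def rename (y z : X) : MuTerm X → MuTerm X
  | var x => if x = y then var z else var x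
  | zero => zero
  | one => one
  | add s t => add (rename y z s) (rename y z t)
  | mul s t => mul (rename y z s) (rename y z t)
  | mu x t => if x = y then mu x t else mu x (rename y z t)

theorem size_rename (y z : X) : ∀ t : MuTerm X, (rename y z t).size = t.size
  | var x => by simp only [rename]; split <;> rfl
  | zero => rfl
  | one => rfl
  | add s t => by simp [rename, size, size_rename y z s, size_rename y z t]
  | mul s t => by simp [rename, size, size_rename y z s, size_rename y z t]
  | mu x t => by
      simp only [rename]; split
      · rfl
      · simp [size, size_rename y z t]

variable [Infinite X]

/-- Capture-avoiding substitution `t[x := u]`: substitute `u` for the free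
occurrences of `x` in the last argument, renaming bound variables to fresh
ones to avoid capture. -/
noncomputable def subst (x : X) (u : MuTerm X) : MuTerm X → MuTerm X
  | var y => if y = x then u else var y
  | zero => zero
  | one => one
  | add s t => add (subst x u s) (subst x u t)
  | mul s t => mul (subst x u s) (subst x u t)
  | mu y t =>
    if y = x then mu y t
    else
      let z : X := Classical.choose (Infinite.exists_notMem_finset (vars t ∪ fv u ∪ {x}))
      mu z (subst x u (rename y z t))
  termination_by t => size t
  decreasing_by
    all_goals simp only [size, size_rename]
    all_goals omega

/-- The `n`-th approximant `nx.t`: `0x.t = 0`, `(n+1)x.t = t[x := nx.t]`. -/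
noncomputable def napprox : ℕ → X → MuTerm X → MuTerm X
  | 0, _, _ => zero
  | n + 1, x, t => subst x (napprox n x t) t

end MuTerm

/-- Polynomial functions over a semiring `C` in `n` indeterminates: functions
built from constants in `C`, projections, addition, and multiplication. -/
inductive IsPolyFun {C : Type} [Semiring C] : {n : ℕ} → ((Fin n → C) → C) → Prop
  | const {n : ℕ} (c : C) : IsPolyFun fun _ : Fin n → C => c
  | proj {n : ℕ} (i : Fin n) : IsPolyFun fun v => v i
  | add {n : ℕ} {p q : (Fin n → C) → C} :
      IsPolyFun p → IsPolyFun q → IsPolyFun fun v => p v + q v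
  | mul {n : ℕ} {p q : (Fin n → C) → C} :
      IsPolyFun p → IsPolyFun q → IsPolyFun fun v => p v * q v

/-- A Chomsky algebra is an idempotent semiring (ordered by `a ≤ b ↔ a + b = b`)
in which every finite system of polynomial inequalities `pᵢ ≤ xᵢ` has a least
solution. -/
class ChomskyAlgebra (C : Type) extends IdemSemiring C where
  algClosed : ∀ {n : ℕ} (p : Fin n → (Fin n → C) → C), (∀ i, IsPolyFun (p i)) →
    ∃ sol : Fin n → C, (∀ i, p i sol ≤ sol i) ∧
      ∀ τ : Fin n → C, (∀ i, p i τ ≤ τ i) → ∀ i, sol i ≤ τ i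

/-- `IsInterp eval` says that `eval` is the family of interpretations of
μ-expressions over the Chomsky algebra `C`, one for each valuation `v : X → C`:
each `eval v` is a homomorphism with respect to the semiring operations, and
`eval v (μx.t)` is the least `a` with `eval v[x↦a] t ≤ a`. -/
structure IsInterp {X C : Type} [DecidableEq X] [Infinite X] [ChomskyAlgebra C]
    (eval : (X → C) → MuTerm X → C) : Prop where
  var : ∀ (v : X → C) (x : X), eval v (.var x) = v x
  zero : ∀ v, eval v .zero = 0
  one : ∀ v, eval v .one = 1
  add : ∀ v s t, eval v (.add s t) = eval v s + eval v t
  mul : ∀ v s t, eval v (.mul s t) = eval v s * eval v t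
  mu : ∀ (v : X → C) (x : X) (t : MuTerm X),
    IsLeast {a : C | eval (Function.update v x a) t ≤ a} (eval v (.mu x t))

/-- A Chomsky algebra `C` is μ-continuous if for every interpretation `σ` over
`C`, all `c, d ∈ C`, and every term `t`,
`c·σ(μx.t)·d = sup_{n ≥ 0} c·σ(nx.t)·d` (in particular the supremum exists). -/
def MuContinuous (C : Type) [ChomskyAlgebra C] : Prop :=
  ∀ (X : Type) [DecidableEq X] [Infinite X] (eval : (X → C) → MuTerm X → C),
    IsInterp eval → ∀ (v : X → C) (c d : C) (x : X) (t : MuTerm X),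
      IsLUB (Set.range fun n : ℕ => c * eval v (MuTerm.napprox n x t) * d)
        (c * eval v (.mu x t) * d)

/-- A language interpretation `τ : T X → P(Y*)`: a homomorphism for the
semiring operations on languages with `τ(μx.t) = ⋃ n, τ(nx.t)`. -/
structure IsLangInterp {X Y : Type} [DecidableEq X] [Infinite X]
    (τ : MuTerm X → Language Y) : Prop where
  zero : τ .zero = 0
  one : τ .one = 1
  add : ∀ s t, τ (.add s t) = τ s + τ t
  mul : ∀ s t, τ (.mul s t) = τ s * τ t
  mu : ∀ (x : X) (t : MuTerm X), τ (.mu x t) = ⨆ n : ℕ, τ (MuTerm.napprox n x t)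

/-- The canonical interpretation `L_X : T X → P(X*)`: the language
interpretation with `L_X(x) = {x}`. -/
def IsCanonicalInterp {X : Type} [DecidableEq X] [Infinite X]
    (L : MuTerm X → Language X) : Prop :=
  IsLangInterp L ∧ ∀ x : X, L (.var x) = {[x]}

/-- For a word `w = x₁⋯x_k ∈ X*` and `σ : X → K`, `wordProd σ w` is the
product `σ(x₁)⋯σ(x_k)` in `K`, with the empty word mapped to `1`. -/
def wordProd {X K : Type} [Monoid K] (σ : X → K) (w : List X) : K :=
  (w.map σ).prod

/-- `IsLangEval E` says that `E` is the family of structurally induced language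
interpretations, one for each assignment `σ : X → P(Y*)` of languages to
variables: each `E σ` is a homomorphism for the semiring operations on
languages, with `E σ (μx.t) = ⋃ n, E σ (nx.t)`. -/
structure IsLangEval {X Y : Type} [DecidableEq X] [Infinite X]
    (E : (X → Language Y) → MuTerm X → Language Y) : Prop where
  var : ∀ (σ : X → Language Y) (x : X), E σ (.var x) = σ x
  zero : ∀ σ, E σ .zero = 0
  one : ∀ σ, E σ .one = 1
  add : ∀ σ s t, E σ (.add s t) = E σ s + E σ t
  mul : ∀ σ s t, E σ (.mul s t) = E σ s * E σ t
  mu : ∀ (σ : X → Language Y) (x : X) (t : MuTerm X),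
    E σ (.mu x t) = ⨆ n : ℕ, E σ (MuTerm.napprox n x t)

/-!
`E` is pinned down by its equations although the clause for `μx.t` refers to the approximants
`nx.t`, which are not subterms of `μx.t`: by induction on terms, `E σ t = denote σ t`, where
`denote` is defined by structural recursion and reads `μx.t` as the Kleene iteration
`⨆ n, F^[n] ∅` of `F A = denote σ[x↦A] t`. To reach the approximants, the induction runs over
terms under lists of pending renamings and substitutions whose substituted terms already satisfy
the claim; pushing such a list through a binder `μy` yields a list acting on the body, and
substituting an approximant for the new bound variable extends it. Since concatenation
distributes over unions of chains, `F` is ω-continuous, so by Kleene's theorem its iteration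
from `∅` is the least fixed point of `F`.
-/

theorem Function.update_iSup {ι α β : Type*} [DecidableEq α] [CompleteLattice β]
    (f : ι → α → β) (a : α) (b : ι → β) :
    Function.update (⨆ i, f i) a (⨆ i, b i) = ⨆ i, Function.update (f i) a (b i) := by
  funext a'
  by_cases ha : a' = a
  · subst ha; simp [iSup_apply]
  · simp [iSup_apply, Function.update_of_ne ha]

theorem Language.iSup_mul_iSup_of_monotone {α : Type*} {S T : ℕ → Language α}
    (hS : Monotone S) (hT : Monotone T) : (⨆ n, S n) * (⨆ n, T n) = ⨆ n, S n * T n := by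
  refine le_antisymm ?_ (iSup_le fun n => mul_le_mul' (le_iSup S n) (le_iSup T n))
  simp only [Language.iSup_mul, Language.mul_iSup]
  exact iSup₂_le fun i j => le_iSup_of_le (max i j)
    (mul_le_mul' (hS (le_max_right i j)) (hT (le_max_left i j)))

namespace MuTerm

section Substitution

variable {X : Type} [DecidableEq X]

theorem fv_subset_vars : ∀ t : MuTerm X, fv t ⊆ vars t
  | var _ | zero | one => by simp [fv, vars]
  | add s t | mul s t => Finset.union_subset_union (fv_subset_vars s) (fv_subset_vars t)
  | mu x t => by
      simp only [fv, vars]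
      exact Finset.sdiff_subset.trans ((fv_subset_vars t).trans (Finset.subset_insert x _))

theorem notMem_fv_of_notMem_vars {z : X} {t : MuTerm X} (h : z ∉ vars t) : z ∉ fv t :=
  fun hz => h (fv_subset_vars t hz)

theorem rename_of_notMem_fv {y : X} (z : X) : ∀ {t : MuTerm X}, y ∉ fv t → rename y z t = t
  | var x, h => by simp_all [fv, rename, eq_comm]
  | zero, _ | one, _ => rfl
  | add s t, h | mul s t, h => by
      simp only [fv, Finset.mem_union, not_or] at h
      simp only [rename, rename_of_notMem_fv z h.1, rename_of_notMem_fv z h.2]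
  | mu x t, h => by
      by_cases hxy : x = y
      · simp [rename, hxy]
      · have : y ∉ fv t := by simpa [fv, Ne.symm hxy] using h
        simp [rename, hxy, rename_of_notMem_fv z this]

theorem mem_fv_rename_of_ne {y z w : X} (hwy : w ≠ y) :
    ∀ {t : MuTerm X}, w ∈ fv t → w ∈ fv (rename y z t)
  | var x, h => by simp_all [fv, rename]
  | add s t, h | mul s t, h => by
      simp only [fv, rename, Finset.mem_union] at h ⊢
      exact h.imp (mem_fv_rename_of_ne hwy) (mem_fv_rename_of_ne hwy)
  | mu x t, h => by
      simp only [fv, Finset.mem_sdiff, Finset.mem_singleton] at h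
      by_cases hxy : x = y
      · simpa [rename, hxy, fv] using h
      · simpa [rename, hxy, fv] using And.intro (mem_fv_rename_of_ne hwy h.1) h.2

theorem mem_fv_rename {y z w : X} :
    ∀ {t : MuTerm X}, z ∉ vars t →
      (w ∈ fv (rename y z t) ↔ w ∈ fv t ∧ w ≠ y ∨ y ∈ fv t ∧ w = z)
  | var x, _ => by by_cases x = y <;> simp_all [fv, rename, eq_comm]
  | zero, _ | one, _ => by simp [fv, rename]
  | add s t, hz | mul s t, hz => by
      simp only [vars, Finset.mem_union, not_or] at hz
      simp only [fv, rename, Finset.mem_union, mem_fv_rename hz.1, mem_fv_rename hz.2]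
      tauto
  | mu x t, hz => by
      simp only [vars, Finset.mem_insert, not_or] at hz
      by_cases hxy : x = y
      · subst hxy; simp [rename, fv]
      · simp only [rename, hxy, if_false, fv, Finset.mem_sdiff, Finset.mem_singleton,
          mem_fv_rename hz.2]
        have := notMem_fv_of_notMem_vars hz.2
        constructor
        · rintro ⟨h | ⟨h, rfl⟩, hwx⟩ <;> simp_all [Ne.symm hxy]
        · rintro (⟨⟨h, hwx⟩, hwy⟩ | ⟨⟨h, hyx⟩, rfl⟩) <;> simp_all [eq_comm]

variable [Infinite X]

theorem subst_var (x : X) (u : MuTerm X) (y : X) :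
    subst x u (var y) = if y = x then u else var y := by rw [subst]

@[simp] theorem subst_zero (x : X) (u : MuTerm X) : subst x u zero = zero := by rw [subst]
@[simp] theorem subst_one (x : X) (u : MuTerm X) : subst x u one = one := by rw [subst]
@[simp] theorem subst_add (x : X) (u s t : MuTerm X) :
    subst x u (add s t) = add (subst x u s) (subst x u t) := by rw [subst]
@[simp] theorem subst_mul (x : X) (u s t : MuTerm X) :
    subst x u (mul s t) = mul (subst x u s) (subst x u t) := by rw [subst]
@[simp] theorem subst_mu_self (x : X) (u t : MuTerm X) : subst x u (mu x t) = mu x t := by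
  rw [subst]; simp

noncomputable def substFresh (x : X) (u t : MuTerm X) : X :=
  Classical.choose (Infinite.exists_notMem_finset (vars t ∪ fv u ∪ {x}))

theorem subst_mu_of_ne {x y : X} (u t : MuTerm X) (h : y ≠ x) :
    subst x u (mu y t) = mu (substFresh x u t) (subst x u (rename y (substFresh x u t) t)) := by
  rw [subst]; simp [h, substFresh]

theorem substFresh_spec (x : X) (u t : MuTerm X) :
    substFresh x u t ∉ vars t ∧ substFresh x u t ∉ fv u ∧ substFresh x u t ≠ x := by
  have : substFresh x u t ∉ vars t ∪ fv u ∪ {x} :=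
    Classical.choose_spec (Infinite.exists_notMem_finset _)
  simpa only [Finset.mem_union, Finset.mem_singleton, not_or, and_assoc] using this

theorem mem_fv_subst {x w : X} (u : MuTerm X) :
    ∀ t : MuTerm X,
      w ∈ fv (subst x u t) ↔ w ∈ fv t ∧ w ≠ x ∨ x ∈ fv t ∧ w ∈ fv u
  | var y => by by_cases y = x <;> simp_all [subst_var, fv, eq_comm]
  | zero | one => by simp [fv]
  | add s t | mul s t => by
      simp only [subst_add, subst_mul, fv, Finset.mem_union, mem_fv_subst u s, mem_fv_subst u t]
      tauto
  | mu y t => by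
      by_cases hyx : y = x
      · subst hyx; simp [fv]
      obtain ⟨hzt, hzu, hzx⟩ := substFresh_spec x u t
      have hzt' := notMem_fv_of_notMem_vars hzt
      simp only [subst_mu_of_ne u t hyx, fv, Finset.mem_sdiff, Finset.mem_singleton,
        mem_fv_subst u (rename y _ t), mem_fv_rename hzt]
      generalize substFresh x u t = z at *
      by_cases hwz : w = z
      · subst hwz; simp [hzt', hzu]
      · simp only [hwz, Ne.symm hzx, and_false, or_false, not_false_eq_true, and_true]
  termination_by t => size t
  decreasing_by all_goals simp only [size, size_rename]; omega

theorem mem_fv_napprox {x w : X} {t : MuTerm X} :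
    ∀ {n : ℕ}, w ∈ fv (napprox n x t) → w ∈ fv t ∧ w ≠ x
  | 0, h => by simp [napprox, fv] at h
  | n + 1, h => by
      rw [napprox, mem_fv_subst] at h
      exact h.elim id fun h => mem_fv_napprox h.2

theorem fv_napprox_subset_succ (n : ℕ) (x : X) (t : MuTerm X) :
    fv (napprox n x t) ⊆ fv (napprox (n + 1) x t) := fun _ hw => by
  rw [napprox, mem_fv_subst]
  exact Or.inl (mem_fv_napprox hw)

end Substitution

section Semantics

variable {X Y : Type} [DecidableEq X]

noncomputable def denote (σ : X → Language Y) : MuTerm X → Language Y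
  | var x => σ x
  | zero => 0
  | one => 1
  | add s t => denote σ s + denote σ t
  | mul s t => denote σ s * denote σ t
  | mu x t => ⨆ n : ℕ, (fun A => denote (Function.update σ x A) t)^[n] ⊥

theorem denote_congr : ∀ (t : MuTerm X) {σ σ' : X → Language Y},
    (∀ v ∈ fv t, σ v = σ' v) → denote σ t = denote σ' t
  | var x, _, _, h => h x (by simp [fv])
  | zero, _, _, _ | one, _, _, _ => rfl
  | add s t, _, _, h | mul s t, _, _, h => by
      simp only [fv, Finset.mem_union] at h
      simp only [denote, denote_congr s fun v hv => h v (.inl hv),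
        denote_congr t fun v hv => h v (.inr hv)]
  | mu x t, σ, σ', h => by
      have : ∀ A, denote (Function.update σ x A) t = denote (Function.update σ' x A) t :=
        fun A => denote_congr t fun v hv => by
          by_cases hvx : v = x
          · simp [hvx]
          · simpa [hvx] using h v (by simp [fv, hv, hvx])
      simp only [denote, this]

theorem denote_mono : ∀ (t : MuTerm X) {σ σ' : X → Language Y}, σ ≤ σ' →
    denote σ t ≤ denote σ' t
  | var x, _, _, h => h x
  | zero, _, _, _ | one, _, _, _ => le_rfl
  | add s t, _, _, h => sup_le_sup (denote_mono s h) (denote_mono t h)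
  | mul s t, _, _, h => mul_le_mul' (denote_mono s h) (denote_mono t h)
  | mu _ t, _, _, h => iSup_mono fun n =>
      Monotone.iterate_le_of_le (fun _ _ hAB => denote_mono t (update_le_update_iff'.mpr hAB))
        (fun _ => denote_mono t (update_le_update_iff.mpr ⟨le_rfl, fun j _ => h j⟩)) n ⊥

theorem denote_iSup : ∀ (t : MuTerm X) {σ : ℕ → X → Language Y}, Monotone σ →
    denote (⨆ n, σ n) t = ⨆ n, denote (σ n) t
  | var x, σ, _ => iSup_apply
  | zero, _, _ | one, _, _ => iSup_const.symm
  | add s t, _, hσ => by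
      simp only [denote, denote_iSup s hσ, denote_iSup t hσ]
      exact iSup_sup_eq.symm
  | mul s t, _, hσ => by
      simp only [denote, denote_iSup s hσ, denote_iSup t hσ]
      exact Language.iSup_mul_iSup_of_monotone (fun _ _ h => denote_mono s (hσ h))
        (fun _ _ h => denote_mono t (hσ h))
  | mu x t, σ, hσ => by
      let F : ℕ → Language Y → Language Y := fun n A => denote (Function.update (σ n) x A) t
      have hF : ∀ n, Monotone (F n) := fun n _ _ hAB =>
        denote_mono t (update_le_update_iff'.mpr hAB)
      have hiter : ∀ k, (fun A => denote (Function.update (⨆ n, σ n) x A) t)^[k] ⊥ =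
          ⨆ n, (F n)^[k] ⊥ := by
        intro k
        induction k with
        | zero => simp
        | succ k ih =>
          have hmono : Monotone fun n => (F n)^[k] ⊥ := fun i j hij =>
            Monotone.iterate_le_of_le (hF i)
              (fun _ => denote_mono t (update_le_update_iff.mpr ⟨le_rfl, fun v _ => hσ hij v⟩))
              k ⊥
          rw [Function.iterate_succ_apply', ih, Function.update_iSup, denote_iSup t
            fun i j hij => update_le_update_iff.mpr ⟨hmono hij, fun v _ => hσ hij v⟩]
          simp only [F, Function.iterate_succ_apply']
      simp only [denote, hiter]
      exact iSup_comm

theorem denote_rename {y z : X} : ∀ {t : MuTerm X}, z ∉ vars t → ∀ σ : X → Language Y,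
    denote σ (rename y z t) = denote (Function.update σ y (σ z)) t
  | var w, _, σ => by by_cases h : w = y <;> simp [rename, denote, h]
  | zero, _, _ | one, _, _ => rfl
  | add s t, hz, σ | mul s t, hz, σ => by
      simp only [vars, Finset.mem_union, not_or] at hz
      simp only [rename, denote, denote_rename hz.1, denote_rename hz.2]
  | mu w t, hz, σ => by
      simp only [vars, Finset.mem_insert, not_or] at hz
      by_cases h : w = y
      · subst h
        simp only [rename, if_true]
        refine denote_congr _ fun v hv => ?_
        simp only [fv, Finset.mem_sdiff, Finset.mem_singleton] at hv
        rw [Function.update_of_ne hv.2]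
      · simp only [rename, h, if_false, denote, denote_rename hz.2,
          Function.update_of_ne hz.1, Function.update_comm (Ne.symm h)]

noncomputable def denoteUpdate (σ : X → Language Y) (x : X) (t : MuTerm X) :
    Language Y →o Language Y :=
  ⟨fun A => denote (Function.update σ x A) t,
    fun _ _ h => denote_mono t (update_le_update_iff'.mpr h)⟩

theorem ωScottContinuous_denoteUpdate (σ : X → Language Y) (x : X) (t : MuTerm X) :
    OmegaCompletePartialOrder.ωScottContinuous (denoteUpdate σ x t) := by
  refine OmegaCompletePartialOrder.ωScottContinuous_iff_map_ωSup_of_orderHom.mpr fun c => ?_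
  change denote (Function.update σ x (⨆ n, c n)) t = ⨆ n, denote (Function.update σ x (c n)) t
  have h := Function.update_iSup (fun _ : ℕ => σ) x c
  rw [iSup_const] at h
  rw [h]
  exact denote_iSup t fun i j h => update_le_update_iff'.mpr (c.monotone h)

theorem denote_mu_eq_lfp (σ : X → Language Y) (x : X) (t : MuTerm X) :
    denote σ (mu x t) = (denoteUpdate σ x t).lfp :=
  (fixedPoints.lfp_eq_sSup_iterate _ (ωScottContinuous_denoteUpdate σ x t)).symm

variable [Infinite X]

theorem denote_subst (x : X) (u : MuTerm X) : ∀ (t : MuTerm X) (σ : X → Language Y),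
    denote σ (subst x u t) = denote (Function.update σ x (denote σ u)) t
  | var y, σ => by by_cases h : y = x <;> simp [subst_var, denote, h]
  | zero, _ | one, _ => by simp [denote]
  | add s t, σ | mul s t, σ => by
      simp only [subst_add, subst_mul, denote, denote_subst x u s, denote_subst x u t]
  | mu y t, σ => by
      by_cases hyx : y = x
      · subst hyx
        rw [subst_mu_self]
        refine denote_congr _ fun v hv => ?_
        simp only [fv, Finset.mem_sdiff, Finset.mem_singleton] at hv
        rw [Function.update_of_ne hv.2]
      obtain ⟨hzt, hzu, hzx⟩ := substFresh_spec x u t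
      rw [subst_mu_of_ne u t hyx]
      generalize substFresh x u t = z at *
      have hu : ∀ A, denote (Function.update σ z A) u = denote σ u := fun A =>
        denote_congr u fun v hv => Function.update_of_ne (ne_of_mem_of_not_mem hv hzu) _ _
      have hbody : ∀ A, denote (Function.update σ z A) (subst x u (rename y z t)) =
          denote (Function.update (Function.update σ x (denote σ u)) y A) t := fun A => by
        rw [denote_subst x u, hu, denote_rename hzt, Function.update_of_ne hzx,
          Function.update_self]
        refine denote_congr t fun v hv => ?_
        have hvz : v ≠ z := ne_of_mem_of_not_mem hv (notMem_fv_of_notMem_vars hzt)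
        by_cases hvy : v = y
        · simp [hvy]
        by_cases hvx : v = x
        · subst hvx; simp [hvy]
        · simp [hvx, hvy, hvz]
      simp only [denote, hbody]
  termination_by t => size t
  decreasing_by all_goals simp only [size, size_rename]; omega

theorem denote_napprox (x : X) (t : MuTerm X) (σ : X → Language Y) :
    ∀ n, denote σ (napprox n x t) = (fun A => denote (Function.update σ x A) t)^[n] ⊥
  | 0 => rfl
  | n + 1 => by
      rw [napprox, denote_subst, denote_napprox x t σ n, Function.iterate_succ_apply']

theorem denote_mu_eq_iSup_napprox (σ : X → Language Y) (x : X) (t : MuTerm X) :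
    denote σ (mu x t) = ⨆ n, denote σ (napprox n x t) := by
  simp only [denote_napprox]
  rfl

end Semantics

section PendingOps

variable {X Y : Type}

inductive SubstOp (X : Type) : Type
  | rename : X → X → SubstOp X
  | subst : X → MuTerm X → SubstOp X

def SubstOp.target : SubstOp X → X
  | .rename y _ => y
  | .subst x _ => x

def AvoidsVars (l : List (SubstOp X)) (S : Finset X) : Prop :=
  ∀ op ∈ l, op.target ∉ S

theorem avoidsVars_nil (S : Finset X) : AvoidsVars [] S :=
  fun _ h => absurd h List.not_mem_nil

theorem avoidsVars_cons {op : SubstOp X} {l : List (SubstOp X)} {S : Finset X} :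
    AvoidsVars (op :: l) S ↔ op.target ∉ S ∧ AvoidsVars l S :=
  List.forall_mem_cons

variable [DecidableEq X]

noncomputable def SubstOp.updateEnv : SubstOp X → (X → Language Y) → X → Language Y
  | .rename y z, ρ => Function.update ρ y (ρ z)
  | .subst x u, ρ => Function.update ρ x (denote ρ u)

noncomputable def envOps (σ : X → Language Y) (l : List (SubstOp X)) : X → Language Y :=
  l.foldr SubstOp.updateEnv σ

@[simp] theorem envOps_cons (σ : X → Language Y) (op : SubstOp X) (l : List (SubstOp X)) :
    envOps σ (op :: l) = op.updateEnv (envOps σ l) := rfl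

theorem envOps_append (σ : X → Language Y) (l₁ l₂ : List (SubstOp X)) :
    envOps σ (l₁ ++ l₂) = envOps (envOps σ l₂) l₁ :=
  List.foldr_append

theorem SubstOp.updateEnv_of_ne {op : SubstOp X} (ρ : X → Language Y) {v : X}
    (h : v ≠ op.target) : op.updateEnv ρ v = ρ v := by
  cases op <;> exact Function.update_of_ne h _ _

theorem envOps_of_avoidsVars (σ : X → Language Y) {S : Finset X} {v : X} (hv : v ∈ S) :
    ∀ {l : List (SubstOp X)}, AvoidsVars l S → envOps σ l v = σ v
  | [], _ => rfl
  | op :: l, h => by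
      rw [avoidsVars_cons] at h
      exact (SubstOp.updateEnv_of_ne _ (ne_of_mem_of_not_mem hv h.1)).trans
        (envOps_of_avoidsVars σ hv h.2)

theorem denote_envOps_of_avoidsVars (σ : X → Language Y) {l : List (SubstOp X)}
    {e : MuTerm X} (h : AvoidsVars l (fv e)) : denote (envOps σ l) e = denote σ e :=
  denote_congr e fun _ hv => envOps_of_avoidsVars σ hv h

variable [Infinite X]

noncomputable def SubstOp.apply : SubstOp X → MuTerm X → MuTerm X
  | .rename y z, t => MuTerm.rename y z t
  | .subst x u, t => MuTerm.subst x u t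

noncomputable def applyOps (l : List (SubstOp X)) (t : MuTerm X) : MuTerm X :=
  l.foldl (fun t op => op.apply t) t

/-- What `denote_applyOps` needs, plus a property `P` of the substituted terms that the later
operations keep intact. -/
def Admissible (P : MuTerm X → Prop) : MuTerm X → List (SubstOp X) → Prop
  | _, [] => True
  | b, .rename y z :: l => (y ∈ fv b → z ∉ vars b) ∧ Admissible P (rename y z b) l
  | b, .subst x u :: l =>
      (x ∈ fv b → P u ∧ AvoidsVars l (fv u)) ∧ Admissible P (subst x u b) l

/-- Operations not touching the free variables of `e` still change `e`: `subst` renames every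
binder it meets. -/
def AgreesWithDenote (E : (X → Language Y) → MuTerm X → Language Y) (e : MuTerm X) : Prop :=
  ∀ (l : List (SubstOp X)) (σ : X → Language Y), AvoidsVars l (fv e) →
    E σ (applyOps l e) = denote σ e

@[simp] theorem applyOps_cons (op : SubstOp X) (l : List (SubstOp X)) (t : MuTerm X) :
    applyOps (op :: l) t = applyOps l (op.apply t) := rfl

theorem applyOps_append (l₁ l₂ : List (SubstOp X)) (t : MuTerm X) :
    applyOps (l₁ ++ l₂) t = applyOps l₂ (applyOps l₁ t) :=
  List.foldl_append

theorem SubstOp.apply_add (op : SubstOp X) (s t : MuTerm X) :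
    op.apply (add s t) = add (op.apply s) (op.apply t) := by
  cases op <;> simp [apply, MuTerm.rename]

theorem SubstOp.apply_mul (op : SubstOp X) (s t : MuTerm X) :
    op.apply (mul s t) = mul (op.apply s) (op.apply t) := by
  cases op <;> simp [apply, MuTerm.rename]

theorem applyOps_zero (l : List (SubstOp X)) : applyOps l zero = zero := by
  induction l with
  | nil => rfl
  | cons op l ih => cases op <;> simpa [SubstOp.apply, MuTerm.rename] using ih

theorem applyOps_one (l : List (SubstOp X)) : applyOps l one = one := by
  induction l with
  | nil => rfl
  | cons op l ih => cases op <;> simpa [SubstOp.apply, MuTerm.rename] using ih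

theorem applyOps_add (l : List (SubstOp X)) (s t : MuTerm X) :
    applyOps l (add s t) = add (applyOps l s) (applyOps l t) := by
  induction l generalizing s t with
  | nil => rfl
  | cons op l ih => simp only [applyOps_cons, SubstOp.apply_add, ih]

theorem applyOps_mul (l : List (SubstOp X)) (s t : MuTerm X) :
    applyOps l (mul s t) = mul (applyOps l s) (applyOps l t) := by
  induction l generalizing s t with
  | nil => rfl
  | cons op l ih => simp only [applyOps_cons, SubstOp.apply_mul, ih]

theorem SubstOp.fv_apply_of_notMem {op : SubstOp X} {t : MuTerm X} (h : op.target ∉ fv t) :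
    fv (op.apply t) = fv t := by
  cases op with
  | rename y z => exact congrArg fv (rename_of_notMem_fv z h)
  | subst x u =>
      ext w
      simp only [apply, mem_fv_subst]
      exact ⟨fun h' => h'.elim And.left fun h' => absurd h'.1 h,
        fun hw => .inl ⟨hw, fun hwx => h (hwx ▸ hw)⟩⟩

theorem SubstOp.mem_fv_apply_of_ne {op : SubstOp X} {t : MuTerm X} {w : X} (hw : w ∈ fv t)
    (hne : w ≠ op.target) : w ∈ fv (op.apply t) := by
  cases op with
  | rename y z => exact mem_fv_rename_of_ne hne hw
  | subst x u => exact (mem_fv_subst u t).mpr (.inl ⟨hw, hne⟩)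

theorem subset_fv_applyOps {S : Finset X} : ∀ {l : List (SubstOp X)} {t : MuTerm X},
    S ⊆ fv t → AvoidsVars l S → S ⊆ fv (applyOps l t)
  | [], _, hS, _ => hS
  | op :: l, t, hS, h => by
      rw [avoidsVars_cons] at h
      exact subset_fv_applyOps (l := l) (t := op.apply t)
        (fun _ hw => SubstOp.mem_fv_apply_of_ne (hS hw) (ne_of_mem_of_not_mem hw h.1)) h.2

variable {P : MuTerm X → Prop}

theorem admissible_of_avoidsVars : ∀ {l : List (SubstOp X)} {t : MuTerm X},
    AvoidsVars l (fv t) → Admissible P t l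
  | [], _, _ => trivial
  | op :: l, t, h => by
      obtain ⟨hop, hl⟩ := avoidsVars_cons.mp h
      have ih : Admissible P (op.apply t) l :=
        admissible_of_avoidsVars (by rwa [SubstOp.fv_apply_of_notMem hop])
      cases op with
      | rename y z => exact ⟨fun hy => absurd hy hop, ih⟩
      | subst x u => exact ⟨fun hx => absurd hx hop, ih⟩

theorem Admissible.of_append : ∀ {l₁ l₂ : List (SubstOp X)} {t : MuTerm X},
    Admissible P t (l₁ ++ l₂) → Admissible P t l₁
  | [], _, _, _ => trivial
  | .rename _ _ :: _, _, _, h => ⟨h.1, h.2.of_append⟩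
  | .subst _ _ :: _, _, _, h =>
      ⟨fun hx => ⟨(h.1 hx).1, fun o ho => (h.1 hx).2 o (List.mem_append_left _ ho)⟩,
        h.2.of_append⟩

theorem Admissible.of_add_or_mul {f : MuTerm X → MuTerm X → MuTerm X}
    (hf : f = add ∨ f = mul) : ∀ {l : List (SubstOp X)} {s t : MuTerm X},
    Admissible P (f s t) l → Admissible P s l ∧ Admissible P t l
  | [], _, _, _ => ⟨trivial, trivial⟩
  | .rename y z :: l, s, t, h => by
      have ih := Admissible.of_add_or_mul hf (l := l) (s := rename y z s) (t := rename y z t)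
        (by rcases hf with rfl | rfl <;> exact h.2)
      have h1 : y ∈ fv s ∪ fv t → z ∉ vars s ∪ vars t := by
        rcases hf with rfl | rfl <;> exact h.1
      simp only [Finset.mem_union, not_or] at h1
      exact ⟨⟨fun hy => (h1 (.inl hy)).1, ih.1⟩, ⟨fun hy => (h1 (.inr hy)).2, ih.2⟩⟩
  | .subst x u :: l, s, t, h => by
      have ih := Admissible.of_add_or_mul hf (l := l) (s := subst x u s) (t := subst x u t)
        (by rcases hf with rfl | rfl <;> simpa using h.2)
      have h1 : x ∈ fv s ∪ fv t → P u ∧ AvoidsVars l (fv u) := by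
        rcases hf with rfl | rfl <;> exact h.1
      exact ⟨⟨fun hx => h1 (Finset.mem_union_left _ hx), ih.1⟩,
        ⟨fun hx => h1 (Finset.mem_union_right _ hx), ih.2⟩⟩

theorem denote_applyOps (σ : X → Language Y) : ∀ {l : List (SubstOp X)} {t : MuTerm X},
    Admissible P t l → denote σ (applyOps l t) = denote (envOps σ l) t
  | [], _, _ => rfl
  | .rename y z :: l, t, h => by
      rw [applyOps_cons, SubstOp.apply, denote_applyOps σ h.2, envOps_cons, SubstOp.updateEnv]
      by_cases hy : y ∈ fv t
      · exact denote_rename (h.1 hy) _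
      · rw [rename_of_notMem_fv z hy]
        exact denote_congr t fun v hv =>
          (Function.update_of_ne (ne_of_mem_of_not_mem hv hy) _ _).symm
  | .subst x u :: l, t, h => by
      rw [applyOps_cons, SubstOp.apply, denote_applyOps σ h.2, denote_subst]
      rfl

theorem envOps_congr {σ₁ σ₂ : X → Language Y} : ∀ {l : List (SubstOp X)} {t : MuTerm X},
    Admissible P t l → (∀ v ∈ fv (applyOps l t), σ₁ v = σ₂ v) →
    ∀ v ∈ fv t, envOps σ₁ l v = envOps σ₂ l v
  | [], _, _, h => h
  | .rename y z :: l, t, hl, h => fun v hv => by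
      have ih := envOps_congr hl.2 h
      simp only [envOps_cons, SubstOp.updateEnv]
      by_cases hvy : v = y
      · subst hvy
        simpa using ih z ((mem_fv_rename (hl.1 hv)).mpr (.inr ⟨hv, rfl⟩))
      · simpa [hvy] using ih v (mem_fv_rename_of_ne hvy hv)
  | .subst x u :: l, t, hl, h => fun v hv => by
      have ih := envOps_congr hl.2 h
      simp only [envOps_cons, SubstOp.updateEnv]
      by_cases hvx : v = x
      · subst hvx
        simpa using denote_congr u fun w hw => ih w ((mem_fv_subst u t).mpr (.inr ⟨hv, hw⟩))
      · simpa [hvx] using ih v ((mem_fv_subst u t).mpr (.inl ⟨hv, hvx⟩))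

/-- `avoidsVars` is only the invariant that lets `exists_muNormalForm` go through. -/
structure MuNormalForm (P : MuTerm X → Prop) (l : List (SubstOp X)) (y : X) (b : MuTerm X)
    (z : X) (l' : List (SubstOp X)) : Prop where
  applyOps_eq : applyOps l (mu y b) = mu z (applyOps l' b)
  admissible : ∀ (A : MuTerm X) (l₂ : List (SubstOp X)), P A →
    AvoidsVars l₂ (fv (subst z A (applyOps l' b))) → Admissible P b (l' ++ .subst z A :: l₂)
  avoidsVars : ∀ S : Finset X, AvoidsVars l S → S ⊆ fv (mu y b) →
    AvoidsVars l' S ∧ z ∉ S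

theorem muNormalForm_nil (y : X) (b : MuTerm X) : MuNormalForm P [] y b y [] where
  applyOps_eq := rfl
  admissible A l₂ hA h :=
    ⟨fun hy => ⟨hA, fun o ho hou => h o ho <| (mem_fv_subst A b).mpr (.inr ⟨hy, hou⟩)⟩,
      admissible_of_avoidsVars h⟩
  avoidsVars S _ hS := ⟨avoidsVars_nil S, fun hy => by simpa [fv] using hS hy⟩

theorem MuNormalForm.cons_of_apply_eq {l l' : List (SubstOp X)} {y z : X} {b : MuTerm X}
    {op : SubstOp X} (hop : op.apply (mu y b) = mu y b) (h : MuNormalForm P l y b z l') :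
    MuNormalForm P (op :: l) y b z l' where
  applyOps_eq := by rw [applyOps_cons, hop, h.applyOps_eq]
  admissible := h.admissible
  avoidsVars S hS := h.avoidsVars S (avoidsVars_cons.mp hS).2

theorem MuNormalForm.rename_cons {l l' : List (SubstOp X)} {y z y₀ z₀ : X} {b : MuTerm X}
    (hy : y ≠ y₀) (hfresh : y₀ ∈ fv (mu y b) → z₀ ∉ vars (mu y b))
    (h : MuNormalForm P l y (rename y₀ z₀ b) z l') :
    MuNormalForm P (.rename y₀ z₀ :: l) y b z (.rename y₀ z₀ :: l') where
  applyOps_eq := by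
    simp only [applyOps_cons, SubstOp.apply, rename, hy, if_false]
    exact h.applyOps_eq
  admissible A l₂ hA hl₂ :=
    ⟨fun hy₀ hz₀ => hfresh (by simp [fv, hy₀, Ne.symm hy]) (by simp [vars, hz₀]),
      h.admissible A l₂ hA hl₂⟩
  avoidsVars S hS hSb := by
    rw [avoidsVars_cons] at hS
    have hS' : S ⊆ fv (mu y (rename y₀ z₀ b)) := fun v hv => by
      have hvb := hSb hv
      simp only [fv, Finset.mem_sdiff, Finset.mem_singleton] at hvb ⊢
      exact ⟨mem_fv_rename_of_ne (ne_of_mem_of_not_mem hv hS.1) hvb.1, hvb.2⟩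
    obtain ⟨hl', hz⟩ := h.avoidsVars S hS.2 hS'
    exact ⟨avoidsVars_cons.mpr ⟨hS.1, hl'⟩, hz⟩

theorem MuNormalForm.subst_cons {l l' : List (SubstOp X)} {y z x₀ : X} {b u₀ : MuTerm X}
    (hy : y ≠ x₀) (hu₀ : x₀ ∈ fv (mu y b) → P u₀ ∧ AvoidsVars l (fv u₀))
    (h : MuNormalForm P l (substFresh x₀ u₀ b)
      (subst x₀ u₀ (rename y (substFresh x₀ u₀ b) b)) z l') :
    MuNormalForm P (.subst x₀ u₀ :: l) y b z
      (.rename y (substFresh x₀ u₀ b) :: .subst x₀ u₀ :: l') := by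
  have happly := h.applyOps_eq
  rw [← subst_mu_of_ne u₀ b hy] at happly
  obtain ⟨hz₁b, hz₁u, hz₁x⟩ := substFresh_spec x₀ u₀ b
  generalize substFresh x₀ u₀ b = z₁ at *
  refine ⟨happly,
    fun A l₂ hA hl₂ => ⟨fun _ => hz₁b, fun hx₀ => ?_, h.admissible A l₂ hA hl₂⟩,
    fun S hS hSb => ?_⟩
  · have hx₀b : x₀ ∈ fv b := by
      rcases (mem_fv_rename hz₁b).mp hx₀ with h' | h'
      exacts [h'.1, absurd h'.2.symm hz₁x]
    obtain ⟨hPu, hl⟩ := hu₀ (by simp [fv, hx₀b, Ne.symm hy])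
    have hub : fv u₀ ⊆ fv (subst x₀ u₀ (rename y z₁ b)) := fun w hw =>
      (mem_fv_subst _ _).mpr (.inr ⟨hx₀, hw⟩)
    obtain ⟨hl', hzu⟩ := h.avoidsVars (fv u₀) hl fun w hw => by
      simp [fv, hub hw, ne_of_mem_of_not_mem hw hz₁u]
    refine ⟨hPu, List.forall_mem_append.mpr ⟨hl', avoidsVars_cons.mpr ⟨hzu, ?_⟩⟩⟩
    exact fun o ho hou => hl₂ o ho <| (mem_fv_subst A _).mpr
      (.inl ⟨subset_fv_applyOps hub hl' hou, ne_of_mem_of_not_mem hou hzu⟩)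
  · rw [avoidsVars_cons] at hS
    have hyS : y ∉ S := fun hyS => by simpa [fv] using hSb hyS
    have hS' : S ⊆ fv (mu z₁ (subst x₀ u₀ (rename y z₁ b))) := fun v hv => by
      have hvb := hSb hv
      simp only [fv, Finset.mem_sdiff, Finset.mem_singleton] at hvb ⊢
      refine ⟨(mem_fv_subst _ _).mpr (.inl ⟨mem_fv_rename_of_ne hvb.2 hvb.1,
        ne_of_mem_of_not_mem hv hS.1⟩), ?_⟩
      rintro rfl
      exact hz₁b (fv_subset_vars b hvb.1)
    obtain ⟨hl', hz⟩ := h.avoidsVars S hS.2 hS'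
    exact ⟨avoidsVars_cons.mpr ⟨hyS, avoidsVars_cons.mpr ⟨hS.1, hl'⟩⟩, hz⟩

theorem exists_muNormalForm : ∀ (l : List (SubstOp X)) (y : X) (b : MuTerm X),
    Admissible P (mu y b) l → ∃ z l', MuNormalForm P l y b z l'
  | [], y, b, _ => ⟨y, [], muNormalForm_nil y b⟩
  | .rename y₀ z₀ :: l, y, b, h => by
      by_cases hy : y = y₀
      · have hop : (SubstOp.rename y₀ z₀).apply (mu y b) = mu y b := by
          simp [SubstOp.apply, rename, hy]
        obtain ⟨z, l', hnf⟩ := exists_muNormalForm l y b (by rw [← hop]; exact h.2)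
        exact ⟨z, l', hnf.cons_of_apply_eq hop⟩
      · have h2 : Admissible P (mu y (rename y₀ z₀ b)) l := by simpa [rename, hy] using h.2
        obtain ⟨z, l', hnf⟩ := exists_muNormalForm l y _ h2
        exact ⟨z, _, hnf.rename_cons hy h.1⟩
  | .subst x₀ u₀ :: l, y, b, h => by
      by_cases hy : y = x₀
      · subst hy
        have hop : (SubstOp.subst y u₀).apply (mu y b) = mu y b := subst_mu_self y u₀ b
        obtain ⟨z, l', hnf⟩ := exists_muNormalForm l y b (by rw [← hop]; exact h.2)
        exact ⟨z, l', hnf.cons_of_apply_eq hop⟩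
      · have h2 := h.2
        rw [subst_mu_of_ne u₀ b hy] at h2
        obtain ⟨z, l', hnf⟩ := exists_muNormalForm l _ _ h2
        exact ⟨z, _, hnf.subst_cons hy h.1⟩

theorem SubstOp.apply_var_of_ne {op : SubstOp X} {v : X} (h : v ≠ op.target) :
    op.apply (var v) = var v := by
  cases op <;> simp_all [apply, MuTerm.rename, subst_var, target]

section Eval

variable {E : (X → Language Y) → MuTerm X → Language Y}

theorem eval_applyOps_var (hE : IsLangEval E) :
    ∀ {l : List (SubstOp X)} {v : X} (σ : X → Language Y),
      Admissible (AgreesWithDenote E) (var v) l → E σ (applyOps l (var v)) = envOps σ l v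
  | [], v, σ, _ => hE.var σ v
  | op :: l, v, σ, h => by
      by_cases hv : v = op.target
      · cases op with
        | rename y z =>
          obtain rfl : v = y := hv
          have hop : rename v z (var v) = var z := by simp [rename]
          have h2 := h.2
          rw [hop] at h2
          rw [applyOps_cons, SubstOp.apply, hop, eval_applyOps_var hE σ h2]
          simp [SubstOp.updateEnv]
        | subst x u =>
          obtain rfl : v = x := hv
          obtain ⟨hu, hl⟩ := h.1 (by simp [fv])
          rw [applyOps_cons, SubstOp.apply, subst_var, if_pos rfl, hu l σ hl]
          simp [SubstOp.updateEnv, denote_envOps_of_avoidsVars σ hl]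
      · have hop := SubstOp.apply_var_of_ne hv
        have h2 : Admissible (AgreesWithDenote E) (var v) l := by
          rw [← hop]; cases op <;> exact h.2
        rw [applyOps_cons, hop, eval_applyOps_var hE σ h2, envOps_cons,
          SubstOp.updateEnv_of_ne _ hv]

theorem agreesWithDenote_napprox (hE : IsLangEval E) {l l' : List (SubstOp X)} {y z : X}
    {b : MuTerm X} (hnf : MuNormalForm (AgreesWithDenote E) l y b z l')
    (ih : ∀ {l₁} (σ : X → Language Y), Admissible (AgreesWithDenote E) b l₁ →
      E σ (applyOps l₁ b) = denote (envOps σ l₁) b) :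
    ∀ n, AgreesWithDenote E (napprox n z (applyOps l' b))
  | 0 => fun l₂ σ _ => by rw [napprox, applyOps_zero, hE.zero]; rfl
  | n + 1 => fun l₂ σ hl₂ => by
      set N := napprox n z (applyOps l' b)
      have hN := agreesWithDenote_napprox hE hnf ih n
      have hadm := hnf.admissible N l₂ hN hl₂
      have hadm' : Admissible _ b l' :=
        (hnf.admissible N [] hN (avoidsVars_nil _)).of_append
      have happly : applyOps l₂ (napprox (n + 1) z (applyOps l' b)) =
          applyOps (l' ++ .subst z N :: l₂) b := by
        rw [applyOps_append, applyOps_cons]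
        rfl
      rw [happly, ih σ hadm, envOps_append, napprox, denote_subst, denote_applyOps _ hadm']
      refine denote_congr b (envOps_congr hadm' fun w hw => ?_)
      simp only [envOps_cons, SubstOp.updateEnv]
      by_cases hwz : w = z
      · subst hwz
        simp only [Function.update_self]
        exact denote_envOps_of_avoidsVars σ
          fun o ho hoN => hl₂ o ho (fv_napprox_subset_succ n _ _ hoN)
      · simp only [Function.update_of_ne hwz]
        exact envOps_of_avoidsVars σ ((mem_fv_subst N _).mpr (.inl ⟨hw, hwz⟩)) hl₂

theorem eval_applyOps_mu (hE : IsLangEval E) {y : X} {b : MuTerm X}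
    (ih : ∀ {l₁} (σ : X → Language Y), Admissible (AgreesWithDenote E) b l₁ →
      E σ (applyOps l₁ b) = denote (envOps σ l₁) b)
    {l : List (SubstOp X)} (σ : X → Language Y)
    (h : Admissible (AgreesWithDenote E) (mu y b) l) :
    E σ (applyOps l (mu y b)) = denote (envOps σ l) (mu y b) := by
  obtain ⟨z, l', hnf⟩ := exists_muNormalForm l y b h
  rw [← denote_applyOps σ h, hnf.applyOps_eq, hE.mu, denote_mu_eq_iSup_napprox]
  exact iSup_congr fun n =>
    agreesWithDenote_napprox hE hnf ih n [] σ (avoidsVars_nil _)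

theorem eval_applyOps (hE : IsLangEval E) : ∀ (b : MuTerm X) {l : List (SubstOp X)}
    (σ : X → Language Y), Admissible (AgreesWithDenote E) b l →
      E σ (applyOps l b) = denote (envOps σ l) b
  | var _, _, σ, h => eval_applyOps_var hE σ h
  | zero, _, _, _ => by rw [applyOps_zero, hE.zero]; rfl
  | one, _, _, _ => by rw [applyOps_one, hE.one]; rfl
  | add s t, _, σ, h => by
      obtain ⟨hs, ht⟩ := h.of_add_or_mul (.inl rfl)
      rw [applyOps_add, hE.add, eval_applyOps hE s σ hs, eval_applyOps hE t σ ht]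
      rfl
  | mul s t, _, σ, h => by
      obtain ⟨hs, ht⟩ := h.of_add_or_mul (.inr rfl)
      rw [applyOps_mul, hE.mul, eval_applyOps hE s σ hs, eval_applyOps hE t σ ht]
      rfl
  | mu _ b, _, σ, h => eval_applyOps_mu hE (fun σ h => eval_applyOps hE b σ h) σ h

end Eval

theorem _root_.IsLangEval.eq_denote {E : (X → Language Y) → MuTerm X → Language Y}
    (hE : IsLangEval E) (σ : X → Language Y) (t : MuTerm X) : E σ t = denote σ t :=
  eval_applyOps hE t (l := []) σ trivial

end PendingOps

end MuTerm

/-- For the structurally induced language interpretation,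
`σ̂(μx.t)` is the least language `A` with `σ̂[x↦A](t) ⊆ A`. -/
theorem statement3 {X Y : Type} [DecidableEq X] [Infinite X]
    (E : (X → Language Y) → MuTerm X → Language Y) (hE : IsLangEval E)
    (σ : X → Language Y) (t : MuTerm X) (x : X) :
    E (Function.update σ x (E σ (.mu x t))) t = E σ (.mu x t) ∧
    ∀ A : Language Y, E (Function.update σ x A) t ≤ A → E σ (.mu x t) ≤ A := by
  simp only [hE.eq_denote, MuTerm.denote_mu_eq_lfp]
  exact ⟨(MuTerm.denoteUpdate σ x t).map_lfp, fun _ => (MuTerm.denoteUpdate σ x t).lfp_le⟩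
end

section
/- The following two equations hold in all μ-continuous Chomsky algebras: for every interpretation σ over a μ-continuous Chomsky algebra and all terms a, b with x ∉ FV(a) ∪ FV(b), σ(a·μx.(1 + x·b)) = σ(μx.(a + x·b)) and σ((μx.(1 + b·x))·a) = σ(μx.(a + b·x)). -/
/-! By the substitution lemma, the approximants of `μx.(a + x·b)` satisfy
`f₀ = 0`, `fₙ₊₁ = σ(a) + fₙ·σ(b)`, and those of `μx.(1 + x·b)` satisfy
`g₀ = 0`, `gₙ₊₁ = 1 + gₙ·σ(b)`; hence `fₙ = σ(a)·gₙ` for all `n`. Applying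
μ-continuity once with `c = σ(a), d = 1` and once with `c = d = 1` exhibits
both sides of the first equation as the supremum of the same chain. The second
equation is the mirror image. -/

open Function

theorem MuTerm.fv_subset_vars_s13 {X : Type} [DecidableEq X] (t : MuTerm X) : t.fv ⊆ t.vars := by
  induction t with
  | var | zero | one => simp [fv, vars]
  | add s t hs ht | mul s t hs ht => exact Finset.union_subset_union hs ht
  | mu x t ht => exact Finset.sdiff_subset.trans (ht.trans (Finset.subset_insert x _))

namespace IsInterp

variable {X C : Type} [DecidableEq X] [Infinite X] [ChomskyAlgebra C]
  {eval : (X → C) → MuTerm X → C} (h : IsInterp eval)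
include h

theorem eval_mu_eq {v w : X → C} {x y : X} {s t : MuTerm X}
    (hst : ∀ a, eval (update v x a) s = eval (update w y a) t) :
    eval v (.mu x s) = eval w (.mu y t) :=
  (h.mu v x s).unique (by simpa only [hst] using h.mu w y t)

theorem eval_congr (t : MuTerm X) {v w : X → C} (hvw : ∀ y ∈ t.fv, v y = w y) :
    eval v t = eval w t := by
  induction t generalizing v w with
  | var x => simpa [h.var, MuTerm.fv] using hvw
  | zero => rw [h.zero, h.zero]
  | one => rw [h.one, h.one]
  | add s t hs ht =>
    simp only [MuTerm.fv, Finset.mem_union] at hvw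
    rw [h.add, h.add, hs fun y hy => hvw y (.inl hy), ht fun y hy => hvw y (.inr hy)]
  | mul s t hs ht =>
    simp only [MuTerm.fv, Finset.mem_union] at hvw
    rw [h.mul, h.mul, hs fun y hy => hvw y (.inl hy), ht fun y hy => hvw y (.inr hy)]
  | mu x t ht =>
    refine h.eval_mu_eq fun a => ht fun y hy => ?_
    by_cases hyx : y = x
    · subst hyx; simp
    · simpa [update_of_ne hyx] using hvw y (by simp [MuTerm.fv, hy, hyx])

theorem eval_update_of_notMem_fv {t : MuTerm X} {x : X} (hx : x ∉ t.fv) (v : X → C) (c : C) :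
    eval (update v x c) t = eval v t :=
  h.eval_congr t fun _ hy => update_of_ne (ne_of_mem_of_not_mem hy hx) _ _

theorem eval_rename (t : MuTerm X) {y z : X} (hz : z ∉ t.vars) (v : X → C) :
    eval v (t.rename y z) = eval (update v y (v z)) t := by
  induction t generalizing v with
  | var x =>
    simp only [MuTerm.rename]
    split_ifs with hxy
    · subst hxy; rw [h.var, h.var, update_self]
    · rw [h.var, h.var, update_of_ne hxy]
  | zero => rw [MuTerm.rename, h.zero, h.zero]
  | one => rw [MuTerm.rename, h.one, h.one]
  | add s t hs ht =>
    simp only [MuTerm.vars, Finset.mem_union, not_or] at hz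
    rw [MuTerm.rename, h.add, h.add, hs hz.1, ht hz.2]
  | mul s t hs ht =>
    simp only [MuTerm.vars, Finset.mem_union, not_or] at hz
    rw [MuTerm.rename, h.mul, h.mul, hs hz.1, ht hz.2]
  | mu x t ht =>
    simp only [MuTerm.vars, Finset.mem_insert, not_or] at hz
    simp only [MuTerm.rename]
    split_ifs with hxy
    · subst hxy
      exact h.eval_mu_eq fun a => by rw [update_idem]
    · refine h.eval_mu_eq fun a => ?_
      rw [ht hz.2, update_of_ne hz.1, update_comm (Ne.symm hxy)]

theorem eval_subst (x : X) (u : MuTerm X) :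
    ∀ (t : MuTerm X) (v : X → C), eval v (MuTerm.subst x u t) = eval (update v x (eval v u)) t
  | .var y, v => by
    rw [MuTerm.subst]
    split_ifs with hyx
    · subst hyx; rw [h.var, update_self]
    · rw [h.var, h.var, update_of_ne hyx]
  | .zero, v => by rw [MuTerm.subst, h.zero, h.zero]
  | .one, v => by rw [MuTerm.subst, h.one, h.one]
  | .add s t, v => by rw [MuTerm.subst, h.add, h.add, eval_subst x u s, eval_subst x u t]
  | .mul s t, v => by rw [MuTerm.subst, h.mul, h.mul, eval_subst x u s, eval_subst x u t]
  | .mu y t, v => by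
    rw [MuTerm.subst]
    split_ifs with hyx
    · subst hyx
      exact h.eval_mu_eq fun a => by rw [update_idem]
    · have hz := Classical.choose_spec (Infinite.exists_notMem_finset (t.vars ∪ u.fv ∪ {x}))
      set z := Classical.choose (Infinite.exists_notMem_finset (t.vars ∪ u.fv ∪ {x}))
      simp only [Finset.mem_union, Finset.mem_singleton, not_or] at hz
      obtain ⟨⟨hzt, hzu⟩, hzx⟩ := hz
      refine h.eval_mu_eq fun a => ?_
      rw [eval_subst x u (t.rename y z), h.eval_update_of_notMem_fv hzu, h.eval_rename t hzt,
        update_of_ne hzx, update_self]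
      -- the fresh `z` may coincide with `y`, so the valuations agree only on `fv t`
      refine h.eval_congr t fun w hw => ?_
      have hwz : w ≠ z := ne_of_mem_of_not_mem (MuTerm.fv_subset_vars_s13 t hw) hzt
      simp only [update_apply]
      split_ifs <;> simp_all
  termination_by t => t.size
  decreasing_by all_goals simp only [MuTerm.size, MuTerm.size_rename]; omega

theorem eval_napprox_zero (v : X → C) (x : X) (t : MuTerm X) :
    eval v (MuTerm.napprox 0 x t) = 0 :=
  h.zero v

theorem eval_napprox_succ (v : X → C) (n : ℕ) (x : X) (t : MuTerm X) :
    eval v (MuTerm.napprox (n + 1) x t) =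
      eval (update v x (eval v (MuTerm.napprox n x t))) t :=
  h.eval_subst x _ t v

theorem eval_napprox_add_var_mul (v : X → C) {a b : MuTerm X} {x : X}
    (hxa : x ∉ a.fv) (hxb : x ∉ b.fv) (n : ℕ) :
    eval v (MuTerm.napprox n x (.add a (.mul (.var x) b))) =
      eval v a * eval v (MuTerm.napprox n x (.add .one (.mul (.var x) b))) := by
  induction n with
  | zero => rw [h.eval_napprox_zero, h.eval_napprox_zero, mul_zero]
  | succ n ih =>
    simp only [h.eval_napprox_succ, h.add, h.mul, h.var, h.one, update_self,
      h.eval_update_of_notMem_fv hxa, h.eval_update_of_notMem_fv hxb, ih]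
    rw [mul_add, mul_one, mul_assoc]

theorem eval_napprox_add_mul_var (v : X → C) {a b : MuTerm X} {x : X}
    (hxa : x ∉ a.fv) (hxb : x ∉ b.fv) (n : ℕ) :
    eval v (MuTerm.napprox n x (.add a (.mul b (.var x)))) =
      eval v (MuTerm.napprox n x (.add .one (.mul b (.var x)))) * eval v a := by
  induction n with
  | zero => rw [h.eval_napprox_zero, h.eval_napprox_zero, zero_mul]
  | succ n ih =>
    simp only [h.eval_napprox_succ, h.add, h.mul, h.var, h.one, update_self,
      h.eval_update_of_notMem_fv hxa, h.eval_update_of_notMem_fv hxb, ih]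
    rw [add_mul, one_mul, mul_assoc]

theorem eval_mu_eq_of_napprox (hC : MuContinuous C) (v : X → C) {x : X} {s t : MuTerm X}
    {c d : C} (happrox : ∀ n, eval v (MuTerm.napprox n x t) =
      c * eval v (MuTerm.napprox n x s) * d) :
    eval v (.mu x t) = c * eval v (.mu x s) * d := by
  have hs := hC X eval h v c d x s
  have ht := hC X eval h v 1 1 x t
  simp only [one_mul, mul_one, happrox] at ht
  exact ht.unique hs

end IsInterp

/-- `a·μx.(1 + x·b) = μx.(a + x·b)` and
`(μx.(1 + b·x))·a = μx.(a + b·x)` hold in all μ-continuous Chomsky algebras. -/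
theorem statement13 {X C : Type} [DecidableEq X] [Infinite X] [ChomskyAlgebra C]
    (hC : MuContinuous C) (eval : (X → C) → MuTerm X → C) (h : IsInterp eval)
    (v : X → C) (a b : MuTerm X) (x : X)
    (hxa : x ∉ MuTerm.fv a) (hxb : x ∉ MuTerm.fv b) :
    eval v (.mul a (.mu x (.add .one (.mul (.var x) b)))) =
      eval v (.mu x (.add a (.mul (.var x) b))) ∧
    eval v (.mul (.mu x (.add .one (.mul b (.var x)))) a) =
      eval v (.mu x (.add a (.mul b (.var x)))) := by
  constructor
  · rw [h.mul, h.eval_mu_eq_of_napprox hC v fun n =>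
      (h.eval_napprox_add_var_mul v hxa hxb n).trans (mul_one _).symm, mul_one]
  · rw [h.mul, h.eval_mu_eq_of_napprox hC v fun n =>
      (h.eval_napprox_add_mul_var v hxa hxb n).trans (congrArg (· * _) (one_mul _).symm), one_mul]
end
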